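/- Let X be a topological vector space, T a continuous linear operator on X, and x ∈ X with x ∈ M_x^T, where M_x^T = {y ∈ X : for every neighborhood U of 0, {n ∈ ℕ : y - T^n x ∈ U} has positive upper density}. Then M_x^T equals the closure of the orbit {T^n x : n ∈ ℕ}. -/

import Mathlib

open Filter Topology

open scoped Classical in
noncomputable def upperDensity (A : Set ℕ) : ℝ :=
  Filter.limsup (fun n : ℕ => (((Finset.range (n + 1)).filter (fun m => m ∈ A)).card : ℝ) / n) Filter.atTop

def Mset {𝕜 X : Type*} [RCLike 𝕜] [AddCommGroup X] [Module 𝕜 X] [TopologicalSpace X]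
    [IsTopologicalAddGroup X] [ContinuousSMul 𝕜 X] (T : X →L[𝕜] X) (x : X) : Set X :=
  {y | ∀ U ∈ 𝓝 (0 : X), 0 < upperDensity {n : ℕ | y - (T ^ n) x ∈ U}}

/-! A set of positive upper density is nonempty, and positivity of the upper density survives
enlarging the set and shifting it by a fixed `m`. Consequently every point of `M_x^T` is a limit
of orbit points; `M_x^T` is closed (split a neighbourhood of `0` as `W + W`); and `M_x^T` is
invariant under `T` (pull a neighbourhood of `0` back along `T ^ m`, which shifts the set of
return times by `m`). So `x ∈ M_x^T` puts the orbit, hence its closure, inside `M_x^T`. -/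

section UpperDensity

open scoped Classical

lemma upperDensity_eq_limsup_count (A : Set ℕ) :
    upperDensity A = limsup (fun n : ℕ => (Nat.count (· ∈ A) (n + 1) : ℝ) / n) atTop := by
  simp only [upperDensity, Nat.count_eq_card_filter_range]

lemma upperDensity_pos_iff {A : Set ℕ} :
    0 < upperDensity A ↔
      ∃ c > (0 : ℝ), ∃ᶠ n in atTop, c * n ≤ Nat.count (· ∈ A) (n + 1) := by
  rw [upperDensity_eq_limsup_count]
  constructor
  · intro hpos
    have hcobdd : IsCoboundedUnder (· ≤ ·) atTop
        (fun n : ℕ => (Nat.count (· ∈ A) (n + 1) : ℝ) / n) :=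
      isCoboundedUnder_le_of_le atTop fun n => by positivity
    refine ⟨_, half_pos hpos, (frequently_lt_of_lt_limsup hcobdd (half_lt_self hpos)).mono ?_⟩
    intro n hn
    rcases n.eq_zero_or_pos with rfl | hn0
    · simp
    · exact ((lt_div_iff₀ (by exact_mod_cast hn0)).mp hn).le
  · rintro ⟨c, hc, hfreq⟩
    have hbdd : IsBoundedUnder (· ≤ ·) atTop
        (fun n : ℕ => (Nat.count (· ∈ A) (n + 1) : ℝ) / n) := by
      refine isBoundedUnder_of_eventually_le (a := 2) ?_
      filter_upwards [eventually_ge_atTop 1] with n hn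
      have hn' : (1 : ℝ) ≤ n := by exact_mod_cast hn
      have hcount : (Nat.count (· ∈ A) (n + 1) : ℝ) ≤ n + 1 := by
        exact_mod_cast Nat.count_le _
      rw [div_le_iff₀ (by linarith)]
      linarith
    refine hc.trans_le (le_limsup_of_frequently_le ?_ hbdd)
    refine (hfreq.and_eventually (eventually_ge_atTop 1)).mono fun n ⟨hn, hn1⟩ => ?_
    exact (le_div_iff₀ (by exact_mod_cast hn1)).mpr hn

lemma nonempty_of_upperDensity_pos {A : Set ℕ} (hA : 0 < upperDensity A) : A.Nonempty := by
  obtain ⟨c, hc, hfreq⟩ := upperDensity_pos_iff.mp hA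
  obtain ⟨n, hn, hn1⟩ := (hfreq.and_eventually (eventually_ge_atTop 1)).exists
  have hcount : 0 < Nat.count (· ∈ A) (n + 1) := by
    have : (0 : ℝ) < c * n := mul_pos hc (by exact_mod_cast hn1)
    exact_mod_cast this.trans_le hn
  obtain ⟨k, -, hk⟩ :=
    Nat.exists_of_count_lt_count (p := (· ∈ A)) (a := 0) (b := n + 1) (by rwa [Nat.count_zero])
  exact ⟨k, hk⟩

lemma upperDensity_pos_mono {A B : Set ℕ} (hAB : A ⊆ B) (hA : 0 < upperDensity A) :
    0 < upperDensity B := by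
  obtain ⟨c, hc, hfreq⟩ := upperDensity_pos_iff.mp hA
  refine upperDensity_pos_iff.mpr ⟨c, hc, hfreq.mono fun n hn => hn.trans ?_⟩
  exact_mod_cast Nat.count_mono_left fun k _ hk => hAB hk

lemma upperDensity_pos_of_preimage_add {B : Set ℕ} (m : ℕ)
    (h : 0 < upperDensity ((· + m) ⁻¹' B)) : 0 < upperDensity B := by
  obtain ⟨c, hc, hfreq⟩ := upperDensity_pos_iff.mp h
  refine upperDensity_pos_iff.mpr ⟨c / 2, half_pos hc, (tendsto_add_atTop_nat m).frequently ?_⟩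
  refine (hfreq.and_eventually (eventually_ge_atTop m)).mono fun n ⟨hn, hmn⟩ => ?_
  have hshift :
      Nat.count (· ∈ (· + m) ⁻¹' B) (n + 1) ≤ Nat.count (· ∈ B) (n + m + 1) := by
    rw [add_right_comm, Nat.count_add' _ (n + 1) m]
    exact Nat.le_add_right _ _
  have hmn' : (m : ℝ) ≤ n := by exact_mod_cast hmn
  calc c / 2 * ↑(n + m) ≤ c * n := by push_cast; nlinarith
    _ ≤ Nat.count (· ∈ (· + m) ⁻¹' B) (n + 1) := hn
    _ ≤ Nat.count (· ∈ B) (n + m + 1) := by exact_mod_cast hshift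

end UpperDensity

section Mset

variable {𝕜 X : Type*} [RCLike 𝕜] [AddCommGroup X] [Module 𝕜 X] [TopologicalSpace X]
  [IsTopologicalAddGroup X] [ContinuousSMul 𝕜 X] {T : X →L[𝕜] X} {x : X}

lemma pow_apply_mem_Mset {y : X} (hy : y ∈ Mset T x) (m : ℕ) : (T ^ m) y ∈ Mset T x := by
  intro U hU
  have hpre : (T ^ m) ⁻¹' U ∈ 𝓝 (0 : X) :=
    (T ^ m).continuous.continuousAt.preimage_mem_nhds (by simpa using hU)
  refine upperDensity_pos_of_preimage_add m (upperDensity_pos_mono ?_ (hy _ hpre))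
  intro k hk
  change (T ^ m) y - (T ^ (k + m)) x ∈ U
  rwa [add_comm, pow_add, mul_apply_eq_comp, ← map_sub]

lemma isClosed_Mset : IsClosed (Mset T x) := by
  refine isClosed_of_closure_subset fun y hy U hU => ?_
  obtain ⟨W, hW, hWU⟩ := exists_nhds_zero_half hU
  obtain ⟨z, hz, hzy⟩ := mem_closure_iff_nhds_zero.mp hy _ (neg_mem_nhds_zero X hW)
  refine upperDensity_pos_mono (fun k hk => ?_) (hz W hW)
  have hyz : y - z ∈ W := by simpa using hzy
  simpa using hWU _ hyz _ hk

lemma Mset_subset_closure_orbit : Mset T x ⊆ closure (Set.range fun n : ℕ => (T ^ n) x) := by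
  intro y hy
  refine mem_closure_iff_nhds_zero.mpr fun U hU => ?_
  obtain ⟨n, hn⟩ := nonempty_of_upperDensity_pos (hy _ (neg_mem_nhds_zero X hU))
  exact ⟨(T ^ n) x, ⟨n, rfl⟩, by simpa using hn⟩

end Mset

theorem Mset_eq_closure_orbit {𝕜 X : Type*} [RCLike 𝕜] [AddCommGroup X] [Module 𝕜 X]
    [TopologicalSpace X] [IsTopologicalAddGroup X] [ContinuousSMul 𝕜 X]
    (T : X →L[𝕜] X) (x : X) (hx : x ∈ Mset T x) :
    Mset T x = closure (Set.range fun n : ℕ => (T ^ n) x) :=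
  Mset_subset_closure_orbit.antisymm <|
    closure_minimal (Set.range_subset_iff.mpr (pow_apply_mem_Mset hx)) isClosed_Mset
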